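/- Let g be a gflow of an extended open graph and let g_σ (σ ∈ {X,Y,Z}) be the recursively defined maps from Theorem 1's proof. For every u ∈ Oᶜ: g_σ(u) ∩ {u} = g(u) ∩ {u} and Odd(g_σ(u)) ∩ {u} = Odd(g(u)) ∩ {u}. -/

import Mathlib

open scoped symmDiff

inductive Pauli | X | Y | Z
deriving DecidableEq

inductive MPlane | XY | XZ | YZ
deriving DecidableEq

/-- The set of Pauli operators defining a measurement plane. -/
def MPlane.paulis : MPlane → Finset Pauli
  | .XY => {.X, .Y}
  | .XZ => {.X, .Z}
  | .YZ => {.Y, .Z}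

variable {V : Type} [Fintype V] [DecidableEq V]

/-- Odd neighbourhood: vertices with an odd number of neighbours in `A`. -/
def oddNbhd (G : SimpleGraph V) [DecidableRel G.Adj] (A : Finset V) : Finset V :=
  Finset.univ.filter fun w => Odd (A.filter (G.Adj w)).card

/-- `f` is extensive w.r.t. the strict order `r`. -/
def IsExtensive (O : Finset V) (r : V → V → Prop) (f : V → Finset V) : Prop :=
  ∀ u ∉ O, ∀ v ∈ f u, v ≠ u → r u v

/-- gflow of an extended open graph `(G, I, O, lam)`. -/
def IsGflow (G : SimpleGraph V) [DecidableRel G.Adj]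
    (I O : Finset V) (lam : V → MPlane) (g : V → Finset V) : Prop :=
  (∀ u ∉ O, g u ⊆ Iᶜ) ∧
  (∃ r : V → V → Prop, IsStrictOrder V r ∧
    IsExtensive O r (fun u => g u ∪ oddNbhd G (g u))) ∧
  ∀ u ∉ O,
    (lam u = .XY → u ∈ oddNbhd G (g u) ∧ u ∉ g u) ∧
    (lam u = .XZ → u ∈ g u ∧ u ∈ oddNbhd G (g u)) ∧
    (lam u = .YZ → u ∈ g u ∧ u ∉ oddNbhd G (g u))

/-- σ-normal forms for gflows. -/
def IsNF (σ : Pauli) (G : SimpleGraph V) [DecidableRel G.Adj]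
    (O : Finset V) (g : V → Finset V) : Prop :=
  match σ with
  | .X => ∀ u ∉ O, oddNbhd G (g u) ⊆ insert u O
  | .Y => ∀ u ∉ O, (g u ∆ oddNbhd G (g u)) ⊆ insert u O
  | .Z => ∀ u ∉ O, g u ⊆ insert u O
instance : Std.Commutative (α := Finset V) (· ∆ ·) := ⟨symmDiff_comm⟩
instance : Std.Associative (α := Finset V) (· ∆ ·) := ⟨symmDiff_assoc⟩

/-- Iterated symmetric difference `△_{v ∈ s} f v`. -/
def symmDiffFold (s : Finset V) (f : V → Finset V) : Finset V :=
  s.fold (· ∆ ·) ∅ f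

/-! Unfolding the recursion, `g_σ(u) = g(u) △ F_u`, where `F_u` is the symmetric difference of the
`g_σ(w)` over vertices `w ∉ O` with `u ≺ w`. Since `Odd` is additive under `△`, well-founded
induction along the finite strict order `≺` shows that each `g_σ` is again extensive. Hence
`F_u ∪ Odd(F_u)` lies strictly above `u`, so adding `F_u` changes neither whether `u ∈ g(u)` nor
whether `u ∈ Odd(g(u))`. -/

theorem Finset.odd_card_symmDiff {α : Type*} [DecidableEq α] (A B : Finset α) :
    Odd (A ∆ B).card ↔ Xor (Odd A.card) (Odd B.card) := by
  have hsymm : (A ∆ B).card = (A ∪ B).card - (A ∩ B).card := by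
    rw [symmDiff_eq_sup_sdiff_inf]
    exact Finset.card_sdiff_of_subset Finset.inter_subset_union
  have hle : (A ∩ B).card ≤ (A ∪ B).card := Finset.card_le_card Finset.inter_subset_union
  have hsum := Finset.card_union_add_card_inter A B
  simp only [hsymm, Nat.odd_iff, xor_def]
  omega

theorem Finset.symmDiff_inter_singleton_of_notMem {α : Type*} [DecidableEq α] (A : Finset α)
    {B : Finset α} {a : α} (h : a ∉ B) : A ∆ B ∩ {a} = A ∩ {a} := by
  ext x
  by_cases hx : x = a <;> simp [Finset.mem_symmDiff, hx, h]

section OddNeighbourhood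

variable (G : SimpleGraph V) [DecidableRel G.Adj]

omit [DecidableEq V] in
theorem oddNbhd_empty : oddNbhd G ∅ = ∅ := by
  simp [oddNbhd]

theorem oddNbhd_symmDiff (A B : Finset V) :
    oddNbhd G (A ∆ B) = oddNbhd G A ∆ oddNbhd G B := by
  ext w
  have hfilter : (A ∆ B).filter (G.Adj w) = A.filter (G.Adj w) ∆ B.filter (G.Adj w) := by
    ext x
    simp only [Finset.mem_filter, Finset.mem_symmDiff]
    tauto
  simp only [oddNbhd, Finset.mem_symmDiff, Finset.mem_filter, Finset.mem_univ, true_and, hfilter,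
    Finset.odd_card_symmDiff, xor_def]

theorem oddNbhd_symmDiffFold (s : Finset V) (f : V → Finset V) :
    oddNbhd G (symmDiffFold s f) = symmDiffFold s (fun w => oddNbhd G (f w)) := by
  induction s using Finset.induction_on with
  | empty => exact oddNbhd_empty G
  | insert a s ha ih =>
    simp only [symmDiffFold, Finset.fold_insert ha] at ih ⊢
    rw [oddNbhd_symmDiff, ih]

theorem symmDiff_union_oddNbhd_subset (A B : Finset V) :
    A ∆ B ∪ oddNbhd G (A ∆ B) ⊆ (A ∪ oddNbhd G A) ∪ (B ∪ oddNbhd G B) := by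
  rw [oddNbhd_symmDiff]
  intro x hx
  simp only [Finset.mem_union, Finset.mem_symmDiff] at hx ⊢
  tauto

end OddNeighbourhood

theorem forall_mem_symmDiffFold {p : V → Prop} {s : Finset V} {f : V → Finset V}
    (h : ∀ w ∈ s, ∀ x ∈ f w, p x) : ∀ x ∈ symmDiffFold s f, p x := by
  induction s using Finset.induction_on with
  | empty => simp [symmDiffFold]
  | insert a s ha ih =>
    intro x hx
    rw [symmDiffFold, Finset.fold_insert ha] at hx
    rcases Finset.mem_union.mp (symmDiff_le_sup (α := Finset V) hx) with hx | hx
    · exact h a (Finset.mem_insert_self a s) x hx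
    · exact ih (fun w hw => h w (Finset.mem_insert_of_mem hw)) x hx

theorem forall_mem_union_oddNbhd_symmDiffFold (G : SimpleGraph V) [DecidableRel G.Adj]
    {p : V → Prop} {s : Finset V} {f : V → Finset V}
    (h : ∀ w ∈ s, ∀ x ∈ f w ∪ oddNbhd G (f w), p x) :
    ∀ x ∈ symmDiffFold s f ∪ oddNbhd G (symmDiffFold s f), p x := by
  intro x hx
  rw [oddNbhd_symmDiffFold, Finset.mem_union] at hx
  rcases hx with hx | hx
  · exact forall_mem_symmDiffFold (fun w hw y hy => h w hw y (Finset.mem_union_left _ hy)) x hx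
  · exact forall_mem_symmDiffFold (fun w hw y hy => h w hw y (Finset.mem_union_right _ hy)) x hx

section Recursion

variable {G : SimpleGraph V} [DecidableRel G.Adj] {O : Finset V} {r : V → V → Prop}
  {g gs S : V → Finset V}

omit [Fintype V] in
theorem IsExtensive.later_of_mem_sdiff_insert {f A : V → Finset V} (hext : IsExtensive O r f)
    (hA : ∀ u, A u ⊆ f u) : ∀ u ∉ O, ∀ w ∈ A u \ insert u O, w ∉ O ∧ r u w := by
  intro u hu w hw
  simp only [Finset.mem_sdiff, Finset.mem_insert, not_or] at hw
  exact ⟨hw.2.2, hext u hu w (hA u hw.1) hw.2.1⟩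

theorem later_of_mem_union_oddNbhd_symmDiffFold [IsTrans V r] {u : V}
    (hS : ∀ w ∈ S u, r u w)
    (hgs : ∀ w ∈ S u, ∀ x ∈ gs w ∪ oddNbhd G (gs w), x ≠ w → r w x) :
    ∀ x ∈ symmDiffFold (S u) gs ∪ oddNbhd G (symmDiffFold (S u) gs), r u x := by
  refine forall_mem_union_oddNbhd_symmDiffFold G fun w hw x hx => ?_
  by_cases hxw : x = w
  · exact hxw ▸ hS w hw
  · exact _root_.trans (hS w hw) (hgs w hw x hx hxw)

variable [IsStrictOrder V r] (hext : IsExtensive O r (fun u => g u ∪ oddNbhd G (g u)))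
  (hS : ∀ u ∉ O, ∀ w ∈ S u, w ∉ O ∧ r u w) (hgs : ∀ u ∉ O, gs u = g u ∆ symmDiffFold (S u) gs)
include hext hS hgs

theorem IsExtensive.of_symmDiffFold_recursion :
    IsExtensive O r (fun u => gs u ∪ oddNbhd G (gs u)) := by
  intro u
  induction u using (Finite.wellFounded_of_trans_of_irrefl (Function.swap r)).induction with
  | _ u ih =>
  intro hu x (hx : x ∈ gs u ∪ oddNbhd G (gs u)) hxu
  have hlater := later_of_mem_union_oddNbhd_symmDiffFold (fun w hw => (hS u hu w hw).2)
    fun w hw => ih w (hS u hu w hw).2 (hS u hu w hw).1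
  rw [hgs u hu] at hx
  rcases Finset.mem_union.mp (symmDiff_union_oddNbhd_subset G _ _ hx) with hx | hx
  · exact hext u hu x hx hxu
  · exact hlater x hx

theorem inter_singleton_eq_of_symmDiffFold_recursion {u : V} (hu : u ∉ O) :
    gs u ∩ {u} = g u ∩ {u} ∧ oddNbhd G (gs u) ∩ {u} = oddNbhd G (g u) ∩ {u} := by
  have hlater := later_of_mem_union_oddNbhd_symmDiffFold (fun w hw => (hS u hu w hw).2)
    fun w hw => IsExtensive.of_symmDiffFold_recursion hext hS hgs w (hS u hu w hw).1
  have hu' : u ∉ symmDiffFold (S u) gs ∪ oddNbhd G (symmDiffFold (S u) gs) :=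
    fun h => irrefl u (hlater u h)
  rw [Finset.mem_union, not_or] at hu'
  rw [hgs u hu, oddNbhd_symmDiff]
  exact ⟨Finset.symmDiff_inter_singleton_of_notMem _ hu'.1,
    Finset.symmDiff_inter_singleton_of_notMem _ hu'.2⟩

end Recursion

theorem gsigma_fixes_u_general (G : SimpleGraph V) [DecidableRel G.Adj]
    (O : Finset V) (g : V → Finset V)
    (r : V → V → Prop) (hr : IsStrictOrder V r)
    (hext : IsExtensive O r (fun u => g u ∪ oddNbhd G (g u)))
    (gX gY gZ : V → Finset V)
    (hgX : ∀ u ∉ O, gX u = g u ∆ symmDiffFold ((oddNbhd G (g u)) \ insert u O) gX)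
    (hgY : ∀ u ∉ O, gY u = g u ∆ symmDiffFold ((g u ∆ oddNbhd G (g u)) \ insert u O) gY)
    (hgZ : ∀ u ∉ O, gZ u = g u ∆ symmDiffFold ((g u) \ insert u O) gZ) :
    ∀ u ∉ O,
      (gX u ∩ {u} = g u ∩ {u} ∧ oddNbhd G (gX u) ∩ {u} = oddNbhd G (g u) ∩ {u}) ∧
      (gY u ∩ {u} = g u ∩ {u} ∧ oddNbhd G (gY u) ∩ {u} = oddNbhd G (g u) ∩ {u}) ∧
      (gZ u ∩ {u} = g u ∩ {u} ∧ oddNbhd G (gZ u) ∩ {u} = oddNbhd G (g u) ∩ {u}) := by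
  have := hr
  intro u hu
  refine ⟨?_, ?_, ?_⟩
  · exact inter_singleton_eq_of_symmDiffFold_recursion hext
      (hext.later_of_mem_sdiff_insert fun _ => Finset.subset_union_right) hgX hu
  · exact inter_singleton_eq_of_symmDiffFold_recursion hext
      (hext.later_of_mem_sdiff_insert fun _ => symmDiff_le_sup) hgY hu
  · exact inter_singleton_eq_of_symmDiffFold_recursion hext
      (hext.later_of_mem_sdiff_insert fun _ => Finset.subset_union_left) hgZ hu

/-- The recursively defined maps `g_σ` agree with `g` on membership of `u` in `g_σ(u)`
and in `Odd(g_σ(u))`. -/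
theorem gsigma_fixes_u (G : SimpleGraph V) [DecidableRel G.Adj]
    (I O : Finset V) (lam : V → MPlane) (g : V → Finset V)
    (r : V → V → Prop) (hr : IsStrictOrder V r)
    (hext : IsExtensive O r (fun u => g u ∪ oddNbhd G (g u)))
    (hg : IsGflow G I O lam g)
    (gX gY gZ : V → Finset V)
    (hgX : ∀ u ∉ O, gX u = g u ∆ symmDiffFold ((oddNbhd G (g u)) \ insert u O) gX)
    (hgY : ∀ u ∉ O, gY u = g u ∆ symmDiffFold ((g u ∆ oddNbhd G (g u)) \ insert u O) gY)
    (hgZ : ∀ u ∉ O, gZ u = g u ∆ symmDiffFold ((g u) \ insert u O) gZ) :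
    ∀ u ∉ O,
      (gX u ∩ {u} = g u ∩ {u} ∧ oddNbhd G (gX u) ∩ {u} = oddNbhd G (g u) ∩ {u}) ∧
      (gY u ∩ {u} = g u ∩ {u} ∧ oddNbhd G (gY u) ∩ {u} = oddNbhd G (g u) ∩ {u}) ∧
      (gZ u ∩ {u} = g u ∩ {u} ∧ oddNbhd G (gZ u) ∩ {u} = oddNbhd G (g u) ∩ {u}) :=
  gsigma_fixes_u_general G O g r hr hext gX gY gZ hgX hgY hgZ
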